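/- arXiv:1703.05876 — 2 statements merged into one kernel-verified Lean document; each statement's English description precedes it below -/
import Mathlib

section
/- (Size–accuracy bound.) Let d, D be natural numbers, Π a d×d complex matrix that is an orthogonal projection of rank D, and ρ : ℝ → (d×d complex matrices) a family such that for every T, ρ(T) is a density matrix with Π ρ(T) Π = ρ(T). Let M : Set ℝ → (d×d complex matrices) satisfy: M(S) is positive semidefinite for every S, M(ℝ) = I, and M(S ∪ S') = M(S) + M(S') whenever S and S' are disjoint. Let T_min < T_max be reals, P ∈ (0,1], and δ > 0, and suppose that for every T ∈ [T_min, T_max] the probability that the measurement outcome lies within δ/2 of the true value satisfies Re Tr(M((T−δ/2, T+δ/2)) · ρ(T)) ≥ P. Then δ ≥ P·(T_max − T_min)/(D+1). -/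
/-!
Put `T_k = T_min + k δ` for `k = 0, …, n` with `n = ⌊(T_max - T_min) / δ⌋`. The windows of width
`δ` around these points are disjoint, so the effects `E_k = M(window_k)` sum to at most `1`.
Because `ρ(T_k)` lives in the range of `Π` and `ρ(T_k) ≤ 1`, the success probability
`tr (E_k ρ(T_k))` is at most `tr (Π E_k Π)`, and these sum to at most `tr Π = D`.
Hence `(n + 1) P ≤ D`, while `T_max - T_min < (n + 1) δ`.
-/

open scoped ComplexOrder MatrixOrder

namespace Matrix

variable {n 𝕜 : Type*} [Fintype n] [RCLike 𝕜]

lemma PosSemidef.trace_mul_nonneg {A B : Matrix n n 𝕜} (hA : A.PosSemidef) (hB : B.PosSemidef) :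
    0 ≤ (A * B).trace := by
  classical
  set s := CFC.sqrt A
  have hs : sᴴ = s := (nonneg_iff_posSemidef.mp (CFC.sqrt_nonneg A)).isHermitian.eq
  calc (0 : 𝕜) ≤ (sᴴ * B * s).trace := (hB.conjTranspose_mul_mul_same s).trace_nonneg
    _ = (s * s * B).trace := by rw [hs, trace_mul_cycle]
    _ = (A * B).trace := by rw [CFC.sqrt_mul_sqrt_self A hA.nonneg]

lemma PosSemidef.trace_mul_le_trace [DecidableEq n] {A B : Matrix n n 𝕜} (hA : A.PosSemidef)
    (hB : B ≤ 1) : (A * B).trace ≤ A.trace := by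
  have h := hA.trace_mul_nonneg (le_iff.mp hB)
  rwa [Matrix.mul_sub, Matrix.mul_one, trace_sub, sub_nonneg] at h

lemma PosSemidef.le_one_of_trace_eq_one [DecidableEq n] {A : Matrix n n 𝕜} (hA : A.PosSemidef)
    (htr : A.trace = 1) : A ≤ 1 := by
  rw [← map_one (algebraMap ℝ (Matrix n n 𝕜)), le_algebraMap_iff_spectrum_le hA.1.isSelfAdjoint,
    hA.1.spectrum_real_eq_range_eigenvalues]
  rintro _ ⟨i, rfl⟩
  have hsum : ∑ j, hA.1.eigenvalues j = 1 := by
    rw [hA.1.trace_eq_sum_eigenvalues] at htr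
    exact_mod_cast htr
  rw [← hsum]
  exact Finset.single_le_sum (fun j _ ↦ hA.eigenvalues_nonneg j) (Finset.mem_univ i)

lemma trace_eq_rank_of_isIdempotentElem {K : Type*} [Field K] [DecidableEq n] {A : Matrix n n K}
    (hA : IsIdempotentElem A) : A.trace = A.rank := by
  have h : IsIdempotentElem A.toLin' := hA.map (toLinAlgEquiv' (R := K) (n := n))
  rw [← trace_toLin'_eq, ((LinearMap.isProj_range_iff_isIdempotentElem _).mpr h).trace, rank,
    toLin'_apply']

theorem sum_trace_mul_le_trace_of_isStarProjection [DecidableEq n] {ι : Type*} (s : Finset ι)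
    {Q : Matrix n n 𝕜} (hQ : IsStarProjection Q) {E σ : ι → Matrix n n 𝕜}
    (hE : ∀ i ∈ s, (E i).PosSemidef) (hEsum : ∑ i ∈ s, E i ≤ 1)
    (hσ : ∀ i ∈ s, (σ i).PosSemidef) (hσtr : ∀ i ∈ s, (σ i).trace = 1)
    (hsupp : ∀ i ∈ s, Q * σ i * Q = σ i) :
    ∑ i ∈ s, (E i * σ i).trace ≤ Q.trace := by
  have hQH : Qᴴ = Q := hQ.isSelfAdjoint
  have compress (i) (hi : i ∈ s) : (E i * σ i).trace ≤ (Q * E i * Q).trace := by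
    have hQEQ : (Q * E i * Q).PosSemidef := by
      simpa only [hQH] using (hE i hi).mul_mul_conjTranspose_same Q
    calc (E i * σ i).trace = (Q * E i * Q * σ i).trace := by
          nth_rw 1 [← hsupp i hi]
          rw [← Matrix.mul_assoc, trace_mul_comm]
          simp only [Matrix.mul_assoc]
      _ ≤ (Q * E i * Q).trace :=
        hQEQ.trace_mul_le_trace ((hσ i hi).le_one_of_trace_eq_one (hσtr i hi))
  calc ∑ i ∈ s, (E i * σ i).trace ≤ ∑ i ∈ s, (Q * E i * Q).trace := Finset.sum_le_sum compress
    _ = (Q * ∑ i ∈ s, E i).trace := by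
      simp only [Finset.mul_sum, trace_sum, trace_mul_cycle _ _ Q, hQ.isIdempotentElem.eq]
    _ ≤ Q.trace := (nonneg_iff_posSemidef.mp hQ.nonneg).trace_mul_le_trace hEsum

end Matrix

def IsFinitelyAdditive {α X : Type*} [Add X] (M : Set α → X) : Prop :=
  ∀ S S' : Set α, Disjoint S S' → M (S ∪ S') = M S + M S'

namespace IsFinitelyAdditive

variable {α X : Type*} {M : Set α → X}

lemma map_empty [AddLeftCancelMonoid X] (hM : IsFinitelyAdditive M) : M ∅ = 0 := by
  have h := hM ∅ ∅ disjoint_bot_left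
  rwa [Set.union_empty, left_eq_add] at h

lemma map_biUnion [AddCancelCommMonoid X] (hM : IsFinitelyAdditive M) {ι : Type*} {s : Finset ι}
    {I : ι → Set α} (hI : (s : Set ι).PairwiseDisjoint I) :
    M (⋃ i ∈ s, I i) = ∑ i ∈ s, M (I i) := by
  classical
  induction s using Finset.induction_on with
  | empty => simpa using hM.map_empty
  | insert i s hi ih =>
    rw [Finset.set_biUnion_insert, Finset.sum_insert hi, hM, ih (hI.subset (by simp))]
    refine Set.disjoint_iUnion₂_right.mpr fun j hj ↦ hI (by simp) (by simp [hj]) ?_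
    rintro rfl
    exact hi hj

lemma map_le_map_univ [AddCommMonoid X] [PartialOrder X] [IsOrderedAddMonoid X]
    (hM : IsFinitelyAdditive M) (hM0 : ∀ S, 0 ≤ M S) (S : Set α) : M S ≤ M Set.univ := by
  rw [← Set.union_compl_self S, hM S Sᶜ disjoint_compl_right]
  exact le_add_of_nonneg_right (hM0 _)

end IsFinitelyAdditive

lemma pairwise_disjoint_Ioo_nat_mul_add {α : Type*} [Field α] [LinearOrder α]
    [IsStrictOrderedRing α] (a : α) {δ : α} (hδ : 0 ≤ δ) :
    Pairwise (Function.onFun Disjoint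
      fun k : ℕ ↦ Set.Ioo (a + k * δ - δ / 2) (a + k * δ + δ / 2)) := by
  intro i j hij
  wlog hlt : i < j generalizing i j
  · exact (this hij.symm (by omega)).symm
  rw [Function.onFun, Set.disjoint_left]
  rintro x ⟨-, hxi⟩ ⟨hxj, -⟩
  have : (i : α) + 1 ≤ j := by exact_mod_cast hlt
  nlinarith

lemma exists_nat_mul_le_lt_succ_mul {α : Type*} [Field α] [LinearOrder α] [IsStrictOrderedRing α]
    [FloorSemiring α] {L δ : α} (hL : 0 ≤ L) (hδ : 0 < δ) :
    ∃ n : ℕ, n * δ ≤ L ∧ L < (n + 1) * δ :=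
  ⟨⌊L / δ⌋₊, (le_div_iff₀ hδ).mp (Nat.floor_le (div_nonneg hL hδ.le)),
    (div_lt_iff₀ hδ).mp (Nat.lt_floor_add_one _)⟩

open Finset in
/-- Size–accuracy bound: if a parameter `T` is encoded in density
matrices supported in a rank-`D` subspace and a (finitely additive) POVM on ℝ
locates `T` within an interval of size `δ` with probability at least `P` for
every `T` in the fiducial interval, then `δ ≥ P (T_max − T_min)/(D+1)`. -/
theorem stmt_1 (d D : ℕ) (Pr : Matrix (Fin d) (Fin d) ℂ)
    (hHerm : Pr.IsHermitian) (hIdem : Pr * Pr = Pr) (hrank : Pr.rank = D)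
    (ρ : ℝ → Matrix (Fin d) (Fin d) ℂ)
    (hρpos : ∀ T, (ρ T).PosSemidef) (hρtr : ∀ T, (ρ T).trace = 1)
    (hsupp : ∀ T, Pr * ρ T * Pr = ρ T)
    (M : Set ℝ → Matrix (Fin d) (Fin d) ℂ)
    (hMpos : ∀ S, (M S).PosSemidef) (hMuniv : M Set.univ = 1)
    (hMadd : ∀ S S' : Set ℝ, Disjoint S S' → M (S ∪ S') = M S + M S')
    (Tmin Tmax : ℝ) (hT : Tmin < Tmax) (P : ℝ) (hP : P ∈ Set.Ioc (0:ℝ) 1)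
    (δ : ℝ) (hδ : 0 < δ)
    (hacc : ∀ T ∈ Set.Icc Tmin Tmax,
      P ≤ (Matrix.trace (M (Set.Ioo (T - δ/2) (T + δ/2)) * ρ T)).re) :
    P * (Tmax - Tmin) / ((D : ℝ) + 1) ≤ δ := by
  obtain ⟨n, hn_le, hn_lt⟩ := exists_nat_mul_le_lt_succ_mul (sub_nonneg.mpr hT.le) hδ
  set T : ℕ → ℝ := fun k ↦ Tmin + k * δ
  have hT_mem (k) (hk : k ∈ range (n + 1)) : T k ∈ Set.Icc Tmin Tmax := by
    have hkn : (k : ℝ) ≤ n := by exact_mod_cast Nat.lt_succ_iff.mp (mem_range.mp hk)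
    constructor <;> nlinarith
  set W : ℕ → Set ℝ := fun k ↦ Set.Ioo (T k - δ / 2) (T k + δ / 2)
  have hW : (range (n + 1) : Set ℕ).PairwiseDisjoint W :=
    (pairwise_disjoint_Ioo_nat_mul_add Tmin hδ.le).set_pairwise _
  have hM : IsFinitelyAdditive M := hMadd
  have hsum_le : ∑ k ∈ range (n + 1), M (W k) ≤ 1 := by
    rw [← hM.map_biUnion hW, ← hMuniv]
    exact hM.map_le_map_univ (fun S ↦ (hMpos S).nonneg) _
  have hbound := Matrix.sum_trace_mul_le_trace_of_isStarProjection (range (n + 1))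
    ⟨hIdem, hHerm⟩ (fun k _ ↦ hMpos (W k)) hsum_le
    (fun k _ ↦ hρpos (T k)) (fun k _ ↦ hρtr (T k)) (fun k _ ↦ hsupp (T k))
  rw [Matrix.trace_eq_rank_of_isIdempotentElem hIdem, hrank] at hbound
  have hcount : (n + 1) * P ≤ D := by
    calc (n + 1) * P = ∑ k ∈ range (n + 1), P := by simp
      _ ≤ ∑ k ∈ range (n + 1), (M (W k) * ρ (T k)).trace.re :=
        sum_le_sum fun k hk ↦ hacc (T k) (hT_mem k hk)
      _ ≤ D := by simpa using Complex.re_le_re hbound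
  rw [div_le_iff₀ (by positivity)]
  calc P * (Tmax - Tmin) ≤ P * ((n + 1) * δ) := by gcongr; exact hP.1.le
    _ = (n + 1) * P * δ := by ring
    _ ≤ D * δ := by gcongr
    _ ≤ δ * (D + 1) := by nlinarith
end

section
/- (Fisher information for known decay rate.) For all reals γ > 0 and T > 0, ∫₀^{2π} e^{−2γT} (sin τ − γ cos τ)² / (2π·(1 + e^{−γT} cos τ)) dτ = 1 − γ² − √(1 − e^{−2γT}) + γ²/√(1 − e^{−2γT}). -/
/-!
Since `|a| < 1`, one can divide `a² (sin τ - γ cos τ)²` by `1 + a cos τ`: using `sin² = 1 - cos²`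
it becomes a constant, a multiple of `cos τ`, a multiple of `1 / (1 + a cos τ)` and a term
`sin τ · g (cos τ)`. Over a full period the cosine and the `sin τ · g (cos τ)` term integrate to `0`
(the latter by `τ ↦ 2π - τ`), and `∫₀^{2π} dτ / (1 + a cos τ) = 2π / √(1 - a²)`.
With `a = e^{-γT}` this gives the Fisher information.
-/

open Real intervalIntegral

lemma one_add_mul_cos_pos {a : ℝ} (ha : |a| < 1) (τ : ℝ) : 0 < 1 + a * cos τ := by
  have h : |a * cos τ| ≤ |a| := by
    rw [abs_mul]
    exact mul_le_of_le_one_right (abs_nonneg a) (abs_cos_le_one τ)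
  linarith [neg_abs_le (a * cos τ)]

lemma integral_sin_mul_comp_cos (g : ℝ → ℝ) :
    ∫ τ in (0:ℝ)..2 * π, sin τ * g (cos τ) = 0 := by
  have h := integral_comp_sub_left (fun τ => sin τ * g (cos τ)) (a := 0) (b := 2 * π) (2 * π)
  simp only [sin_two_pi_sub, cos_two_pi_sub, sub_self, sub_zero, neg_mul, integral_neg] at h
  linarith

-- The continuous version of the Weierstrass-substitution antiderivative
-- `(2 / √(1 - a²)) * arctan (√((1 - a) / (1 + a)) * tan (τ / 2))`, without its jumps at odd multiples of `π`.
lemma hasDerivAt_inv_one_add_mul_cos {a : ℝ} (ha : |a| < 1) (τ : ℝ) :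
    HasDerivAt (fun τ => (τ - 2 * arctan (a * sin τ / (1 + √(1 - a ^ 2) + a * cos τ))) / √(1 - a ^ 2))
      (1 + a * cos τ)⁻¹ τ := by
  set s := √(1 - a ^ 2)
  have ha2 : a ^ 2 < 1 := by nlinarith [sq_abs a, abs_nonneg a]
  have hs : 0 < s := sqrt_pos.mpr (by linarith)
  have hs2 : s ^ 2 = 1 - a ^ 2 := sq_sqrt (by linarith)
  have hD := one_add_mul_cos_pos ha τ
  have hV : 0 < 1 + s + a * cos τ := by linarith
  have hnum : HasDerivAt (fun τ => a * sin τ) (a * cos τ) τ := (hasDerivAt_sin τ).const_mul a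
  have hden : HasDerivAt (fun τ => 1 + s + a * cos τ) (-(a * sin τ)) τ := by
    simpa using ((hasDerivAt_cos τ).const_mul a).const_add (1 + s)
  refine (((hasDerivAt_id τ).sub ((hnum.div hden hV.ne').arctan.const_mul 2)).div_const s).congr_deriv ?_
  simp only [Pi.div_apply]
  field_simp
  linear_combination (-(1 + s + a * cos τ)) * (hs2 + a ^ 2 * sin_sq_add_cos_sq τ)

lemma integral_inv_one_add_mul_cos {a : ℝ} (ha : |a| < 1) :
    ∫ τ in (0:ℝ)..2 * π, (1 + a * cos τ)⁻¹ = 2 * π / √(1 - a ^ 2) := by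
  have hcont : Continuous fun τ => (1 + a * cos τ)⁻¹ :=
    (by fun_prop : Continuous fun τ => 1 + a * cos τ).inv₀ fun τ => (one_add_mul_cos_pos ha τ).ne'
  rw [integral_eq_sub_of_hasDerivAt (fun τ _ => hasDerivAt_inv_one_add_mul_cos ha τ)
    (hcont.intervalIntegrable _ _)]
  simp

lemma integral_sq_sin_sub_mul_cos_div {a : ℝ} (ha : |a| < 1) (γ : ℝ) :
    ∫ τ in (0:ℝ)..2 * π, a ^ 2 * (sin τ - γ * cos τ) ^ 2 / (2 * π * (1 + a * cos τ))
      = 1 - γ ^ 2 - √(1 - a ^ 2) + γ ^ 2 / √(1 - a ^ 2) := by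
  have ha2 : a ^ 2 < 1 := by nlinarith [sq_abs a, abs_nonneg a]
  have hs : 0 < √(1 - a ^ 2) := sqrt_pos.mpr (by linarith)
  have hs2 : √(1 - a ^ 2) ^ 2 = 1 - a ^ 2 := sq_sqrt (by linarith)
  have hinv : Continuous fun τ => (1 + a * cos τ)⁻¹ :=
    (by fun_prop : Continuous fun τ => 1 + a * cos τ).inv₀ fun τ => (one_add_mul_cos_pos ha τ).ne'
  let g : ℝ → ℝ := fun x => -(γ * a ^ 2 * x / π) * (1 + a * x)⁻¹
  have hsplit : ∀ τ, a ^ 2 * (sin τ - γ * cos τ) ^ 2 / (2 * π * (1 + a * cos τ))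
      = ((a ^ 2 + γ ^ 2 - 1) / (2 * π) * (1 + a * cos τ)⁻¹ + (1 - γ ^ 2) / (2 * π)
        + (γ ^ 2 - 1) * a / (2 * π) * cos τ) + sin τ * g (cos τ) := by
    intro τ
    have := (one_add_mul_cos_pos ha τ).ne'
    have := pi_pos.ne'
    simp only [g]
    field_simp
    linear_combination a ^ 2 * sin_sq_add_cos_sq τ
  have hint : ∀ f : ℝ → ℝ, Continuous f → IntervalIntegrable f MeasureTheory.volume 0 (2 * π) :=
    fun f hf => hf.intervalIntegrable _ _
  have hodd : Continuous fun τ => sin τ * g (cos τ) :=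
    continuous_sin.mul (((continuous_const.mul continuous_cos).div_const π).neg.mul hinv)
  rw [integral_congr fun τ _ => hsplit τ, integral_add (hint _ (by fun_prop)) (hint _ hodd),
    integral_sin_mul_comp_cos, integral_add (hint _ (by fun_prop)) (hint _ (by fun_prop)),
    integral_add (hint _ (by fun_prop)) (hint _ (by fun_prop)), integral_const_mul,
    integral_inv_one_add_mul_cos ha, integral_const_mul, integral_cos, integral_const, smul_eq_mul,
    sin_two_pi, sin_zero]
  have := pi_pos.ne'
  field_simp
  linear_combination 2 * π * hs2

/-- Fisher information for known decay rate:
`∫₀^{2π} e^{−2γT}(sin τ − γ cos τ)²/(2π(1 + e^{−γT} cos τ)) dτ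
  = 1 − γ² − √(1 − e^{−2γT}) + γ²/√(1 − e^{−2γT})` for `γ, T > 0`. -/
theorem stmt_12 (γ T : ℝ) (hγ : 0 < γ) (hT : 0 < T) :
    ∫ τ in (0:ℝ)..(2*Real.pi),
        Real.exp (-2*γ*T) * (Real.sin τ - γ * Real.cos τ)^2
          / (2*Real.pi * (1 + Real.exp (-γ*T) * Real.cos τ))
      = 1 - γ^2 - Real.sqrt (1 - Real.exp (-2*γ*T))
        + γ^2 / Real.sqrt (1 - Real.exp (-2*γ*T)) := by
  have ha : |exp (-γ * T)| < 1 := by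
    rw [abs_of_pos (exp_pos _), exp_lt_one_iff]
    nlinarith
  have hsq : exp (-2 * γ * T) = exp (-γ * T) ^ 2 := by
    rw [← exp_nat_mul]
    ring_nf
  rw [hsq]
  exact integral_sq_sin_sub_mul_cos_div ha γ
end
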